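/- arXiv:1911.07295 — 2 statements merged into one kernel-verified Lean document; each statement's English description precedes it below -/
import Mathlib

section
/- For the Markov chain on ℤ of the previous context (biased away from 0 with bias 1/(1+e^{-β}) on each half-line, β > 0, started at 0), one has the law of large numbers: X_n/n converges almost surely to a random variable Y with P(Y = (1-e^{-β})/(1+e^{-β})) = P(Y = -(1-e^{-β})/(1+e^{-β})) = 1/2. -/
open MeasureTheory Filter

/-- Probability of jumping one step to the right from `x`, for the Ant RW on `ℤ`. -/
noncomputable def pUp (β : ℝ) (x : ℤ) : ℝ :=
  if x = 0 then 1/2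
  else if 1 ≤ x then 1 / (1 + Real.exp (-β))
  else Real.exp (-β) / (1 + Real.exp (-β))

/-- Probability of jumping one step to the left from `x`, for the Ant RW on `ℤ`. -/
noncomputable def pDown (β : ℝ) (x : ℤ) : ℝ :=
  if x = 0 then 1/2
  else if 1 ≤ x then Real.exp (-β) / (1 + Real.exp (-β))
  else 1 / (1 + Real.exp (-β))

/-!
A step taken away from `0` is `±1` with mean `v = antSpeed β` and moment generating function
`stepMGF v`. Hence `x ↦ cosh (l x)` (for `l ≥ 0`) and `x ↦ exp (l |x|)` (for `l ≤ 0`) are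
multiplied by at most `stepMGF v l` under the transition operator, and their means along the walk
grow at most like `(stepMGF v l) ^ n`. Since `stepMGF v l < exp (l a)` for small `l` of the sign of
`a - v`, Markov's inequality makes `P (|X n| ≥ a n)` (for `a > v`) and `P (|X n| ≤ a n)` (for
`a < v`) exponentially small, and Borel–Cantelli gives `|X n| / n → v` almost surely.

As `v > 0` and the steps are `±1`, the walk eventually keeps a constant sign. The transition
operator commutes with `x ↦ -x`, so `P (X n > 0) = P (X n < 0)`; letting `n → ∞`, both signs have
probability `1 / 2`.
-/

open Real Topology
open scoped ENNReal

noncomputable def antSpeed (β : ℝ) : ℝ := (1 - exp (-β)) / (1 + exp (-β))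

lemma antSpeed_pos {β : ℝ} (hβ : 0 < β) : 0 < antSpeed β :=
  div_pos (by simpa using exp_lt_one_iff.2 (neg_lt_zero.2 hβ)) (by positivity)

lemma antSpeed_nonneg {β : ℝ} (hβ : 0 ≤ β) : 0 ≤ antSpeed β :=
  div_nonneg (by simpa using exp_le_one_iff.2 (neg_nonpos.2 hβ)) (by positivity)

lemma antSpeed_le_one (β : ℝ) : antSpeed β ≤ 1 := by
  rw [antSpeed, div_le_one (by positivity)]
  linarith [exp_pos (-β)]

lemma pUp_nonneg (β : ℝ) (x : ℤ) : 0 ≤ pUp β x := by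
  unfold pUp; split_ifs <;> positivity

lemma pDown_nonneg (β : ℝ) (x : ℤ) : 0 ≤ pDown β x := by
  unfold pDown; split_ifs <;> positivity

lemma pUp_eq (β : ℝ) (x : ℤ) : pUp β x = (1 + x.sign * antSpeed β) / 2 := by
  have : 1 + exp (-β) ≠ 0 := by positivity
  rcases lt_trichotomy x 0 with hx | rfl | hx
  · simp only [pUp, antSpeed, hx.ne, Int.sign_eq_neg_one_of_neg hx, if_neg (by omega : ¬ 1 ≤ x)]
    push_cast; field_simp; ring
  · simp [pUp]
  · simp only [pUp, antSpeed, hx.ne', Int.sign_eq_one_of_pos hx, if_pos (by omega : 1 ≤ x)]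
    push_cast; field_simp; ring

lemma pDown_eq (β : ℝ) (x : ℤ) : pDown β x = (1 - x.sign * antSpeed β) / 2 := by
  have : 1 + exp (-β) ≠ 0 := by positivity
  rcases lt_trichotomy x 0 with hx | rfl | hx
  · simp only [pDown, antSpeed, hx.ne, Int.sign_eq_neg_one_of_neg hx,
      if_neg (by omega : ¬ 1 ≤ x)]
    push_cast; field_simp; ring
  · simp [pDown]
  · simp only [pDown, antSpeed, hx.ne', Int.sign_eq_one_of_pos hx, if_pos (by omega : 1 ≤ x)]
    push_cast; field_simp; ring

lemma pUp_neg (β : ℝ) (x : ℤ) : pUp β (-x) = pDown β x := by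
  simp only [pUp_eq, pDown_eq, Int.sign_neg, Int.cast_neg]; ring

lemma pDown_neg (β : ℝ) (x : ℤ) : pDown β (-x) = pUp β x := by
  simpa using (pUp_neg β (-x)).symm

/-- `l ↦ E[exp (l ξ)]` for a `±1`-valued step `ξ` with mean `v`. -/
noncomputable def stepMGF (v l : ℝ) : ℝ := cosh l + v * sinh l

lemma hasDerivAt_stepMGF_zero (v : ℝ) : HasDerivAt (stepMGF v) v 0 := by
  have := (hasDerivAt_cosh 0).add ((hasDerivAt_sinh 0).const_mul v)
  rwa [sinh_zero, cosh_zero, zero_add, mul_one] at this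

lemma deriv_exp_mul_sub_stepMGF (v a : ℝ) :
    deriv (fun l => exp (l * a) - stepMGF v l) 0 = a - v := by
  have he : HasDerivAt (fun l => exp (l * a)) a 0 := by
    simpa using ((hasDerivAt_id (0 : ℝ)).mul_const a).exp
  exact (he.sub (hasDerivAt_stepMGF_zero v)).deriv

lemma exists_pos_stepMGF_lt_exp {v a : ℝ} (h : v < a) :
    ∃ l, 0 < l ∧ stepMGF v l < exp (l * a) := by
  have hsign := eventually_nhdsWithin_sign_eq_of_deriv_pos
    (f := fun l => exp (l * a) - stepMGF v l)
    (by rw [deriv_exp_mul_sub_stepMGF]; linarith) (by simp [stepMGF])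
  obtain ⟨l, hsl, hl⟩ :=
    ((hsign.filter_mono (nhdsWithin_le_nhds (s := Set.Ioi 0))).and self_mem_nhdsWithin).exists
  simp only [sub_zero, sign_pos (show (0 : ℝ) < l from hl), sign_eq_one_iff, sub_pos] at hsl
  exact ⟨l, hl, hsl⟩

lemma exists_neg_stepMGF_lt_exp {v a : ℝ} (h : a < v) :
    ∃ l < 0, stepMGF v l < exp (l * a) := by
  have hsign := eventually_nhdsWithin_sign_eq_of_deriv_neg
    (f := fun l => exp (l * a) - stepMGF v l)
    (by rw [deriv_exp_mul_sub_stepMGF]; linarith) (by simp [stepMGF])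
  obtain ⟨l, hsl, hl⟩ :=
    ((hsign.filter_mono (nhdsWithin_le_nhds (s := Set.Iio 0))).and self_mem_nhdsWithin).exists
  simp only [zero_sub, sign_pos (neg_pos.2 (show l < 0 from hl)), sign_eq_one_iff,
    sub_pos] at hsl
  exact ⟨l, hl, hsl⟩

lemma Int.sign_mul_sinh_le_cosh (x : ℤ) (y : ℝ) : x.sign * sinh y ≤ cosh y := by
  rcases lt_trichotomy x 0 with hx | rfl | hx
  · simpa [Int.sign_eq_neg_one_of_neg hx] using (sinh_lt_cosh (-y)).le
  · simpa using (cosh_pos y).le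
  · simpa [Int.sign_eq_one_of_pos hx] using (sinh_lt_cosh y).le

lemma pUp_mul_cosh_add_pDown_mul_cosh_le {β l : ℝ} (hβ : 0 ≤ β) (hl : 0 ≤ l) (x : ℤ) :
    pUp β x * cosh (l * (x + 1)) + pDown β x * cosh (l * (x - 1))
      ≤ stepMGF (antSpeed β) l * cosh (l * x) := by
  have key := mul_nonneg (mul_nonneg (antSpeed_nonneg hβ) (sinh_nonneg_iff.2 hl))
    (sub_nonneg.2 (x.sign_mul_sinh_le_cosh (l * x)))
  rw [pUp_eq, pDown_eq, stepMGF, mul_add, mul_sub, mul_one, cosh_add, cosh_sub]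
  nlinarith [key]

lemma pUp_mul_exp_add_pDown_mul_exp_le {β l : ℝ} (hl : l ≤ 0) (x : ℤ) :
    pUp β x * exp (l * |(x : ℝ) + 1|) + pDown β x * exp (l * |(x : ℝ) - 1|)
      ≤ stepMGF (antSpeed β) l * exp (l * |(x : ℝ)|) := by
  rw [pUp_eq, pDown_eq, stepMGF, cosh_eq, sinh_eq]
  rcases lt_trichotomy x 0 with hx | rfl | hx
  · have hx' : (x : ℝ) ≤ -1 := by exact_mod_cast Int.le_sub_one_of_lt hx
    rw [abs_of_nonpos (by linarith), abs_of_nonpos (by linarith), abs_of_nonpos (by linarith),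
      Int.sign_eq_neg_one_of_neg hx]
    apply le_of_eq
    rw [show l * -((x : ℝ) + 1) = l * -x + -l by ring,
      show l * -((x : ℝ) - 1) = l * -x + l by ring, exp_add, exp_add]
    push_cast; ring
  · have h1 : sinh l ≤ 0 := sinh_nonpos_iff.2 hl
    have h2 := antSpeed_le_one β
    simp only [Int.sign_zero, Int.cast_zero, zero_add, zero_sub, abs_neg, abs_one, abs_zero,
      mul_one, mul_zero, exp_zero, zero_mul, add_zero, sub_zero]
    rw [← sinh_eq, ← cosh_eq]
    nlinarith [cosh_add_sinh l]
  · have hx' : (1 : ℝ) ≤ x := by exact_mod_cast hx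
    rw [abs_of_nonneg (by linarith), abs_of_nonneg (by linarith), abs_of_nonneg (by linarith),
      Int.sign_eq_one_of_pos hx]
    apply le_of_eq
    rw [mul_add, mul_sub, mul_one, exp_add, exp_sub, exp_neg]
    push_cast; field_simp; ring

noncomputable def transitionOp (β : ℝ) (g : ℤ → ℝ≥0∞) (x : ℤ) : ℝ≥0∞ :=
  ENNReal.ofReal (pUp β x) * g (x + 1) + ENNReal.ofReal (pDown β x) * g (x - 1)

lemma transitionOp_comp_neg (β : ℝ) (g : ℤ → ℝ≥0∞) (x : ℤ) :
    transitionOp β (fun y => g (-y)) x = transitionOp β g (-x) := by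
  simp only [transitionOp, pUp_neg, pDown_neg, neg_add', neg_sub', sub_neg_eq_add, add_comm]

lemma transitionOp_ofReal_le {β c : ℝ} {f : ℤ → ℝ} (hf : ∀ x, 0 ≤ f x)
    (h : ∀ x : ℤ, pUp β x * f (x + 1) + pDown β x * f (x - 1) ≤ c * f x) (x : ℤ) :
    transitionOp β (fun y => ENNReal.ofReal (f y)) x
      ≤ ENNReal.ofReal c * ENNReal.ofReal (f x) := by
  have hup := mul_nonneg (pUp_nonneg β x) (hf (x + 1))
  have hdown := mul_nonneg (pDown_nonneg β x) (hf (x - 1))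
  rw [transitionOp, ← ENNReal.ofReal_mul (pUp_nonneg β x),
    ← ENNReal.ofReal_mul (pDown_nonneg β x), ← ENNReal.ofReal_add hup hdown,
    ← ENNReal.ofReal_mul' (hf x)]
  exact ENNReal.ofReal_le_ofReal (h x)

lemma Int.eventually_pos_or_eventually_neg {x : ℕ → ℤ}
    (hstep : ∀ n, x (n + 1) = x n + 1 ∨ x (n + 1) = x n - 1) (hne : ∀ᶠ n in atTop, x n ≠ 0) :
    (∀ᶠ n in atTop, 0 < x n) ∨ ∀ᶠ n in atTop, x n < 0 := by
  obtain ⟨N, hN⟩ := eventually_atTop.1 hne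
  rcases (hN N le_rfl).lt_or_gt with hneg | hpos
  · refine .inr (eventually_atTop.2 ⟨N, fun n hn => ?_⟩)
    induction n, hn using Nat.le_induction with
    | base => exact hneg
    | succ m hm ih => have := hN (m + 1) (by omega); rcases hstep m with h | h <;> omega
  · refine .inl (eventually_atTop.2 ⟨N, fun n hn => ?_⟩)
    induction n, hn using Nat.le_induction with
    | base => exact hpos
    | succ m hm ih => have := hN (m + 1) (by omega); rcases hstep m with h | h <;> omega

section Measure

variable {Ω : Type*} [MeasurableSpace Ω]

lemma lintegral_eq_tsum_setLIntegral_fiber {α : Type*} [MeasurableSpace α]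
    [MeasurableSingletonClass α] [Countable α] {Y : Ω → α} (hY : Measurable Y)
    (μ : Measure Ω) (f : Ω → ℝ≥0∞) :
    ∫⁻ ω, f ω ∂μ = ∑' x, ∫⁻ ω in {ω | Y ω = x}, f ω ∂μ := by
  have hcover : ⋃ x, {ω | Y ω = x} = Set.univ := Set.iUnion_eq_univ_iff.2 fun ω => ⟨Y ω, rfl⟩
  rw [← lintegral_iUnion (s := fun x => {ω | Y ω = x}) (fun x => hY (measurableSet_singleton x))
    (pairwise_disjoint_fiber Y), hcover, setLIntegral_univ]

lemma measure_le_mul_div_pow {μ : Measure Ω} {f : Ω → ℝ≥0∞} (hf : AEMeasurable f μ)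
    {s : Set Ω} {C c t : ℝ≥0∞} {n : ℕ} (ht₀ : t ≠ 0) (ht : t ≠ ∞) (hs : ∀ ω ∈ s, t ^ n ≤ f ω)
    (hf_le : ∫⁻ ω, f ω ∂μ ≤ C * c ^ n) : μ s ≤ C * (c / t) ^ n :=
  calc μ s ≤ μ {ω | t ^ n ≤ f ω} := measure_mono hs
    _ ≤ (∫⁻ ω, f ω ∂μ) / t ^ n :=
      meas_ge_le_lintegral_div hf (pow_ne_zero n ht₀) (ENNReal.pow_ne_top ht)
    _ ≤ C * c ^ n / t ^ n := by gcongr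
    _ = C * (c / t) ^ n := by
      rw [div_eq_mul_inv, div_eq_mul_inv, mul_assoc, mul_pow, ENNReal.inv_pow]

lemma ae_eventually_notMem_of_le_geometric {μ : Measure Ω} {s : ℕ → Set Ω} {C r : ℝ≥0∞}
    (hC : C ≠ ∞) (hr : r < 1) (hs : ∀ n, μ (s n) ≤ C * r ^ n) :
    ∀ᵐ ω ∂μ, ∀ᶠ n in atTop, ω ∉ s n := by
  refine ae_eventually_notMem (ne_top_of_le_ne_top ?_ (ENNReal.tsum_le_tsum hs))
  rw [ENNReal.tsum_mul_left, ENNReal.tsum_geometric]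
  exact ENNReal.mul_ne_top hC (ENNReal.inv_ne_top.2 (tsub_pos_of_lt hr).ne')

lemma measurableSet_eventually_mem {A : ℕ → Set Ω} (hA : ∀ n, MeasurableSet (A n)) :
    MeasurableSet {ω | ∀ᶠ n in atTop, ω ∈ A n} := by
  simpa only [← mem_liminf_iff_eventually_mem, Set.ofPred_mem_eq] using
    MeasurableSet.measurableSet_liminf hA

lemma tendsto_measure_eventually_mem {μ : Measure Ω} [IsFiniteMeasure μ] {A : ℕ → Set Ω}
    (hA : ∀ n, MeasurableSet (A n))
    (h : ∀ᵐ ω ∂μ, (∀ᶠ n in atTop, ω ∈ A n) ∨ ∀ᶠ n in atTop, ω ∉ A n) :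
    Tendsto (fun n => μ (A n)) atTop (𝓝 (μ {ω | ∀ᶠ n in atTop, ω ∈ A n})) := by
  refine tendsto_measure_of_ae_tendsto_indicator_of_isFiniteMeasure atTop
    (measurableSet_eventually_mem hA) hA ?_
  filter_upwards [h] with ω hω
  rcases hω with hin | hout
  · filter_upwards [hin] with n hn using iff_of_true hn hin
  · filter_upwards [hout] with n hn
    exact iff_of_false hn fun hin => (hin.and hout).exists.elim fun _ h => h.2 h.1

end Measure

/-- Only the one-step law from the current position is prescribed; `X` need not be Markov. -/
structure AntTransitions {Ω : Type*} [MeasurableSpace Ω] (P : Measure Ω) (β : ℝ)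
    (X : ℕ → Ω → ℤ) : Prop where
  measurable : ∀ n, Measurable (X n)
  step : ∀ n, ∀ᵐ ω ∂P, X (n + 1) ω = X n ω + 1 ∨ X (n + 1) ω = X n ω - 1
  up : ∀ n x, P ({ω | X n ω = x} ∩ {ω | X (n + 1) ω = x + 1})
    = ENNReal.ofReal (pUp β x) * P {ω | X n ω = x}
  down : ∀ n x, P ({ω | X n ω = x} ∩ {ω | X (n + 1) ω = x - 1})
    = ENNReal.ofReal (pDown β x) * P {ω | X n ω = x}

open Classical in
noncomputable def limitSpeed {Ω : Type*} (β : ℝ) (X : ℕ → Ω → ℤ) (ω : Ω) : ℝ :=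
  if ∀ᶠ n in atTop, 0 < X n ω then antSpeed β else -antSpeed β

namespace AntTransitions

variable {Ω : Type*} [MeasurableSpace Ω] {P : Measure Ω} {β : ℝ} {X : ℕ → Ω → ℤ}

lemma setLIntegral_comp_succ (hX : AntTransitions P β X) (n : ℕ) (x : ℤ) (g : ℤ → ℝ≥0∞) :
    ∫⁻ ω in {ω | X n ω = x}, g (X (n + 1) ω) ∂P = transitionOp β g x * P {ω | X n ω = x} := by
  set A := {ω | X n ω = x}
  set U := A ∩ {ω | X (n + 1) ω = x + 1}
  set D := A ∩ {ω | X (n + 1) ω = x - 1}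
  have hA : MeasurableSet A := hX.measurable n (measurableSet_singleton x)
  have hU : MeasurableSet U := hA.inter (hX.measurable (n + 1) (measurableSet_singleton _))
  have hD : MeasurableSet D := hA.inter (hX.measurable (n + 1) (measurableSet_singleton _))
  have hUD : Disjoint U D := Set.disjoint_left.2 fun ω hU hD => by
    have := hU.2.symm.trans hD.2; omega
  have hA_ae : A =ᵐ[P] (U ∪ D : Set Ω) := by
    filter_upwards [hX.step n] with ω hω
    simp only [U, D, A, eq_iff_iff]
    constructor
    · rintro rfl; exact hω.imp (⟨rfl, ·⟩) (⟨rfl, ·⟩)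
    · rintro (⟨h, -⟩ | ⟨h, -⟩) <;> exact h
  calc ∫⁻ ω in A, g (X (n + 1) ω) ∂P
      = (∫⁻ ω in U, g (X (n + 1) ω) ∂P) + ∫⁻ ω in D, g (X (n + 1) ω) ∂P := by
        rw [setLIntegral_congr hA_ae, lintegral_union hD hUD]
    _ = g (x + 1) * P U + g (x - 1) * P D := by
        rw [setLIntegral_congr_fun hU (fun ω hω => by rw [hω.2]),
          setLIntegral_congr_fun hD (fun ω hω => by rw [hω.2]), setLIntegral_const,
          setLIntegral_const]
    _ = transitionOp β g x * P A := by
        rw [hX.up, hX.down, transitionOp]; ring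

lemma lintegral_comp_succ (hX : AntTransitions P β X) (n : ℕ) (g : ℤ → ℝ≥0∞) :
    ∫⁻ ω, g (X (n + 1) ω) ∂P = ∫⁻ ω, transitionOp β g (X n ω) ∂P := by
  rw [lintegral_eq_tsum_setLIntegral_fiber (hX.measurable n),
    lintegral_eq_tsum_setLIntegral_fiber (hX.measurable n)]
  refine tsum_congr fun x => ?_
  have hA : MeasurableSet {ω | X n ω = x} := hX.measurable n (measurableSet_singleton x)
  rw [hX.setLIntegral_comp_succ,
    setLIntegral_congr_fun hA (fun ω (hω : X n ω = x) => by rw [hω]), setLIntegral_const]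

lemma lintegral_comp_neg (hX : AntTransitions P β X) (hX0 : ∀ ω, X 0 ω = 0) (n : ℕ)
    (g : ℤ → ℝ≥0∞) : ∫⁻ ω, g (-X n ω) ∂P = ∫⁻ ω, g (X n ω) ∂P := by
  induction n generalizing g with
  | zero => simp [hX0]
  | succ n ih =>
    calc ∫⁻ ω, g (-X (n + 1) ω) ∂P
        = ∫⁻ ω, transitionOp β (fun y => g (-y)) (X n ω) ∂P :=
          hX.lintegral_comp_succ n (fun y => g (-y))
      _ = ∫⁻ ω, transitionOp β g (-X n ω) ∂P := by simp only [transitionOp_comp_neg]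
      _ = ∫⁻ ω, g (X (n + 1) ω) ∂P := by rw [ih, hX.lintegral_comp_succ]

lemma measure_pos_eq_measure_neg (hX : AntTransitions P β X) (hX0 : ∀ ω, X 0 ω = 0) (n : ℕ) :
    P {ω | 0 < X n ω} = P {ω | X n ω < 0} := by
  have hmeas (p : ℤ → Prop) : MeasurableSet {ω | p (X n ω)} :=
    hX.measurable n MeasurableSet.of_discrete
  calc P {ω | 0 < X n ω} = ∫⁻ ω, {z : ℤ | z < 0}.indicator 1 (-X n ω) ∂P := by
        rw [← lintegral_indicator_one (hmeas (0 < ·))]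
        congr 1; ext ω; simp [Set.indicator_apply]
    _ = ∫⁻ ω, {z : ℤ | z < 0}.indicator 1 (X n ω) ∂P := hX.lintegral_comp_neg hX0 n _
    _ = P {ω | X n ω < 0} := lintegral_indicator_one (hmeas (· < 0))

section Probability

variable [IsProbabilityMeasure P]

lemma lintegral_le_pow_mul (hX : AntTransitions P β X) (hX0 : ∀ ω, X 0 ω = 0)
    {g : ℤ → ℝ≥0∞} {c : ℝ≥0∞} (hg : ∀ x, transitionOp β g x ≤ c * g x) (n : ℕ) :
    ∫⁻ ω, g (X n ω) ∂P ≤ c ^ n * g 0 := by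
  induction n with
  | zero => simp [hX0]
  | succ n ih =>
    calc ∫⁻ ω, g (X (n + 1) ω) ∂P
        = ∫⁻ ω, transitionOp β g (X n ω) ∂P := hX.lintegral_comp_succ n g
      _ ≤ ∫⁻ ω, c * g (X n ω) ∂P := lintegral_mono fun ω => hg _
      _ = c * ∫⁻ ω, g (X n ω) ∂P :=
        lintegral_const_mul c (measurable_from_top.comp (hX.measurable n))
      _ ≤ c ^ (n + 1) * g 0 := by rw [pow_succ', mul_assoc]; gcongr

/-- Markov's inequality for the Lyapunov function `f (X n)`, then Borel–Cantelli. -/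
lemma ae_eventually_notMem_of_drift (hX : AntTransitions P β X) (hX0 : ∀ ω, X 0 ω = 0)
    {f : ℤ → ℝ} (hf : ∀ x, 0 ≤ f x) {c t : ℝ}
    (hdrift : ∀ x : ℤ, pUp β x * f (x + 1) + pDown β x * f (x - 1) ≤ c * f x)
    (ht : 0 < t) (hct : c < t) {s : ℕ → Set Ω} (hs : ∀ n, ∀ ω ∈ s n, t ^ n ≤ f (X n ω)) :
    ∀ᵐ ω ∂P, ∀ᶠ n in atTop, ω ∉ s n := by
  refine ae_eventually_notMem_of_le_geometric (C := ENNReal.ofReal (f 0))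
    (r := ENNReal.ofReal c / ENNReal.ofReal t) ENNReal.ofReal_ne_top ?_ fun n => ?_
  · exact ENNReal.div_lt_of_lt_mul (by rwa [one_mul, ENNReal.ofReal_lt_ofReal_iff ht])
  have hf_meas : Measurable fun ω => ENNReal.ofReal (f (X n ω)) :=
    (measurable_from_top (f := fun y => ENNReal.ofReal (f y))).comp (hX.measurable n)
  refine measure_le_mul_div_pow hf_meas.aemeasurable (by simpa using ht) ENNReal.ofReal_ne_top
    (fun ω hω => ?_) ?_
  · rw [← ENNReal.ofReal_pow ht.le]
    exact ENNReal.ofReal_le_ofReal (hs n ω hω)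
  · rw [mul_comm]
    exact hX.lintegral_le_pow_mul hX0 (transitionOp_ofReal_le hf hdrift) n

lemma ae_eventually_abs_lt (hX : AntTransitions P β X) (hX0 : ∀ ω, X 0 ω = 0) (hβ : 0 ≤ β)
    {a : ℝ} (ha : antSpeed β < a) : ∀ᵐ ω ∂P, ∀ᶠ n in atTop, |(X n ω : ℝ)| < a * n := by
  obtain ⟨l, hl, hlt⟩ := exists_pos_stepMGF_lt_exp ha
  have hdev := hX.ae_eventually_notMem_of_drift hX0 (f := fun y => 2 * cosh (l * y))
    (fun _ => by positivity)
    (fun x => by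
      push_cast
      linear_combination 2 * pUp_mul_cosh_add_pDown_mul_cosh_le hβ hl.le x)
    (exp_pos _) hlt (s := fun n => {ω | a * n ≤ |(X n ω : ℝ)|})
    fun n ω (hω : a * n ≤ |(X n ω : ℝ)|) =>
      calc exp (l * a) ^ n = exp (l * (a * n)) := by rw [← exp_nat_mul]; ring_nf
        _ ≤ exp |l * X n ω| := by rw [abs_mul, abs_of_pos hl]; gcongr
        _ ≤ 2 * cosh (l * X n ω) := by
          rw [← cosh_abs, cosh_eq]; linarith [exp_pos (-|l * X n ω|)]
  filter_upwards [hdev] with ω hω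
  filter_upwards [hω] with n hn using not_le.1 hn

lemma ae_eventually_lt_abs (hX : AntTransitions P β X) (hX0 : ∀ ω, X 0 ω = 0)
    {a : ℝ} (ha : a < antSpeed β) : ∀ᵐ ω ∂P, ∀ᶠ n in atTop, a * n < |(X n ω : ℝ)| := by
  obtain ⟨l, hl, hlt⟩ := exists_neg_stepMGF_lt_exp ha
  have hdev := hX.ae_eventually_notMem_of_drift hX0 (f := fun y => exp (l * |(y : ℝ)|))
    (fun _ => (exp_pos _).le)
    (fun x => by push_cast; exact pUp_mul_exp_add_pDown_mul_exp_le hl.le x)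
    (exp_pos _) hlt (s := fun n => {ω | |(X n ω : ℝ)| ≤ a * n})
    fun n ω (hω : |(X n ω : ℝ)| ≤ a * n) =>
      calc exp (l * a) ^ n = exp (l * (a * n)) := by rw [← exp_nat_mul]; ring_nf
        _ ≤ exp (l * |(X n ω : ℝ)|) := exp_le_exp.2 (mul_le_mul_of_nonpos_left hω hl.le)
  filter_upwards [hdev] with ω hω
  filter_upwards [hω] with n hn using not_le.1 hn

lemma ae_tendsto_abs_div (hX : AntTransitions P β X) (hX0 : ∀ ω, X 0 ω = 0) (hβ : 0 ≤ β) :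
    ∀ᵐ ω ∂P, Tendsto (fun n : ℕ => |(X n ω : ℝ)| / n) atTop (𝓝 (antSpeed β)) := by
  have hupper : ∀ᵐ ω ∂P, ∀ q : ℚ, antSpeed β < q → ∀ᶠ n in atTop, |(X n ω : ℝ)| < q * n := by
    refine ae_all_iff.2 fun q => ?_
    by_cases hq : antSpeed β < q
    · filter_upwards [hX.ae_eventually_abs_lt hX0 hβ hq] with ω hω using fun _ => hω
    · exact ae_of_all _ fun ω h => absurd h hq
  have hlower : ∀ᵐ ω ∂P, ∀ q : ℚ, q < antSpeed β → ∀ᶠ n in atTop, q * n < |(X n ω : ℝ)| := by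
    refine ae_all_iff.2 fun q => ?_
    by_cases hq : q < antSpeed β
    · filter_upwards [hX.ae_eventually_lt_abs hX0 hq] with ω hω using fun _ => hω
    · exact ae_of_all _ fun ω h => absurd h hq
  filter_upwards [hupper, hlower] with ω hupper hlower
  refine tendsto_order.2 ⟨fun b hb => ?_, fun b hb => ?_⟩
  · obtain ⟨q, hbq, hqv⟩ := exists_rat_btwn hb
    filter_upwards [hlower q hqv, eventually_gt_atTop 0] with n hn hn0
    have hn0 : (0 : ℝ) < n := Nat.cast_pos.2 hn0
    rw [lt_div_iff₀ hn0]; nlinarith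
  · obtain ⟨q, hvq, hqb⟩ := exists_rat_btwn hb
    filter_upwards [hupper q hvq, eventually_gt_atTop 0] with n hn hn0
    have hn0 : (0 : ℝ) < n := Nat.cast_pos.2 hn0
    rw [div_lt_iff₀ hn0]; nlinarith

lemma ae_eventually_pos_or_neg (hX : AntTransitions P β X) (hX0 : ∀ ω, X 0 ω = 0)
    (hβ : 0 < β) : ∀ᵐ ω ∂P, (∀ᶠ n in atTop, 0 < X n ω) ∨ ∀ᶠ n in atTop, X n ω < 0 := by
  filter_upwards [hX.ae_eventually_lt_abs hX0 (a := 0) (antSpeed_pos hβ), ae_all_iff.2 hX.step]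
    with ω hω hstep
  refine Int.eventually_pos_or_eventually_neg hstep (hω.mono fun n hn => ?_)
  rw [zero_mul, abs_pos] at hn
  exact_mod_cast hn

lemma ae_tendsto_div (hX : AntTransitions P β X) (hX0 : ∀ ω, X 0 ω = 0) (hβ : 0 < β) :
    ∀ᵐ ω ∂P, Tendsto (fun n : ℕ => (X n ω : ℝ) / n) atTop (𝓝 (limitSpeed β X ω)) := by
  filter_upwards [hX.ae_tendsto_abs_div hX0 hβ.le, hX.ae_eventually_pos_or_neg hX0 hβ]
    with ω hlim hsign
  rcases hsign with hpos | hneg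
  · rw [limitSpeed, if_pos hpos]
    exact hlim.congr' (hpos.mono fun n hn => by rw [abs_of_pos (Int.cast_pos.2 hn)])
  · rw [limitSpeed, if_neg fun hpos => (hpos.and hneg).exists.elim fun _ h => h.1.not_gt h.2]
    refine hlim.neg.congr' (hneg.mono fun n hn => ?_)
    rw [abs_of_neg (Int.cast_lt_zero.2 hn), neg_div, neg_neg]

lemma measure_eventually_pos (hX : AntTransitions P β X) (hX0 : ∀ ω, X 0 ω = 0) (hβ : 0 < β) :
    P {ω | ∀ᶠ n in atTop, 0 < X n ω} = 1 / 2 := by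
  set Sp := {ω | ∀ᶠ n in atTop, 0 < X n ω}
  set Sm := {ω | ∀ᶠ n in atTop, X n ω < 0}
  have hsign := hX.ae_eventually_pos_or_neg hX0 hβ
  have hmeas (p : ℤ → Prop) (n : ℕ) : MeasurableSet {ω | p (X n ω)} :=
    hX.measurable n MeasurableSet.of_discrete
  have hSp_meas : MeasurableSet Sp := measurableSet_eventually_mem (hmeas (0 < ·))
  have hSm_meas : MeasurableSet Sm := measurableSet_eventually_mem (hmeas (· < 0))
  have hSp := tendsto_measure_eventually_mem (μ := P) (hmeas (0 < ·))
    (hsign.mono fun ω h => h.imp id (·.mono fun n hn => not_lt.2 hn.le))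
  have hSm := tendsto_measure_eventually_mem (μ := P) (hmeas (· < 0))
    (hsign.mono fun ω h => h.symm.imp id (·.mono fun n hn => not_lt.2 hn.le))
  have hsymm : P Sp = P Sm :=
    tendsto_nhds_unique (hSp.congr (hX.measure_pos_eq_measure_neg hX0)) hSm
  have hdisj : Disjoint Sp Sm := Set.disjoint_left.2 fun ω hp hm =>
    (hp.and hm).exists.elim fun _ h => h.1.not_gt h.2
  have hcover : P (Sp ∪ Sm) = 1 :=
    (prob_compl_eq_zero_iff (hSp_meas.union hSm_meas)).1 (ae_iff.1 hsign)
  rw [measure_union hdisj hSm_meas, ← hsymm] at hcover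
  rw [ENNReal.eq_div_iff two_ne_zero ENNReal.ofNat_ne_top, two_mul, hcover]

lemma measure_limitSpeed_eq (hX : AntTransitions P β X) (hX0 : ∀ ω, X 0 ω = 0) (hβ : 0 < β) :
    P {ω | limitSpeed β X ω = antSpeed β} = 1 / 2 := by
  have hv : -antSpeed β ≠ antSpeed β := by linarith [antSpeed_pos hβ]
  simp only [limitSpeed, ite_eq_left_iff, hv, imp_false, not_not]
  exact hX.measure_eventually_pos hX0 hβ

lemma measure_limitSpeed_eq_neg (hX : AntTransitions P β X) (hX0 : ∀ ω, X 0 ω = 0)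
    (hβ : 0 < β) : P {ω | limitSpeed β X ω = -antSpeed β} = 1 / 2 := by
  have hv : antSpeed β ≠ -antSpeed β := by linarith [antSpeed_pos hβ]
  have hS : MeasurableSet {ω | ∀ᶠ n in atTop, 0 < X n ω} := measurableSet_eventually_mem
    fun n => hX.measurable n (MeasurableSet.of_discrete (s := {z : ℤ | 0 < z}))
  simp only [limitSpeed, ite_eq_right_iff, hv, imp_false]
  rw [← Set.compl_ofPred, prob_compl_eq_one_sub hS, hX.measure_eventually_pos hX0 hβ, one_div,
    ENNReal.one_sub_inv_two]

end Probability

end AntTransitions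

theorem stmt9 {Ω : Type*} [MeasurableSpace Ω] (P : Measure Ω) [IsProbabilityMeasure P]
    (β : ℝ) (hβ : 0 < β) (X : ℕ → Ω → ℤ)
    (hXmeas : ∀ n, Measurable (X n))
    (hX0 : ∀ ω, X 0 ω = 0)
    (hstep : ∀ n, ∀ᵐ ω ∂P, X (n+1) ω = X n ω + 1 ∨ X (n+1) ω = X n ω - 1)
    (hMarkov : ∀ (n : ℕ) (x : ℤ) (A : Set Ω),
      MeasurableSet[⨆ i : Fin (n+1), MeasurableSpace.comap (X i.val) inferInstance] A →
      A ⊆ {ω | X n ω = x} →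
      P (A ∩ {ω | X (n+1) ω = x + 1}) = ENNReal.ofReal (pUp β x) * P A ∧
      P (A ∩ {ω | X (n+1) ω = x - 1}) = ENNReal.ofReal (pDown β x) * P A) :
    ∃ Y : Ω → ℝ, Measurable Y ∧
      (∀ᵐ ω ∂P, Tendsto (fun n : ℕ => (X n ω : ℝ) / n) atTop (nhds (Y ω))) ∧
      P {ω | Y ω = (1 - Real.exp (-β)) / (1 + Real.exp (-β))} = 1/2 ∧
      P {ω | Y ω = -((1 - Real.exp (-β)) / (1 + Real.exp (-β)))} = 1/2 := by
  have hfiber (n : ℕ) (x : ℤ) : MeasurableSet[⨆ i : Fin (n + 1),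
      MeasurableSpace.comap (X i.val) inferInstance] {ω | X n ω = x} :=
    le_iSup (fun i : Fin (n + 1) => MeasurableSpace.comap (X i.val) inferInstance) (Fin.last n) _
      ⟨{x}, measurableSet_singleton x, rfl⟩
  have hX : AntTransitions P β X := ⟨hXmeas, hstep,
    fun n x => (hMarkov n x _ (hfiber n x) subset_rfl).1,
    fun n x => (hMarkov n x _ (hfiber n x) subset_rfl).2⟩
  refine ⟨limitSpeed β X, ?_, hX.ae_tendsto_div hX0 hβ, hX.measure_limitSpeed_eq hX0 hβ,
    hX.measure_limitSpeed_eq_neg hX0 hβ⟩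
  exact Measurable.ite (measurableSet_eventually_mem fun n =>
    hXmeas n (MeasurableSet.of_discrete (s := {z : ℤ | 0 < z}))) measurable_const measurable_const
end

section
/- Let X_0, ..., X_n be a path in a locally finite graph and suppose the path makes one full traversal of a circuit C = (u_0, ..., u_{ℓ-1}) during times m, m+1, ..., m+ℓ (i.e., X_{m+i} = u_{i mod ℓ} for 0 ≤ i ≤ ℓ). Then for every directed edge (x,y) of the circuit (x = u_j, y = u_{j+1 mod ℓ}), c_{m+ℓ}(x,y) = c_m(x,y) + 1, and for every directed edge (x,y) with underlying undirected edge not in C, c_{m+ℓ}(x,y) = c_m(x,y). -/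
open Finset

/-- Crossing number of the directed edge `(x,y)` by the path `X` up to time `n`. -/
def cross {V : Type*} [DecidableEq V] (X : ℕ → V) (n : ℕ) (x y : V) : ℤ :=
  ∑ k ∈ Finset.range n,
    ((if X k = x ∧ X (k+1) = y then (1 : ℤ) else 0)
      - (if X k = y ∧ X (k+1) = x then (1 : ℤ) else 0))

private lemma succ_mod_cases (a ℓ : ℕ) (h : a < ℓ) :
    (a+1) % ℓ = a+1 ∨ (a+1 = ℓ ∧ (a+1) % ℓ = 0) := by
  rcases Nat.lt_or_ge (a+1) ℓ with h' | h'
  · exact Or.inl (Nat.mod_eq_of_lt h')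
  · right
    have he : a + 1 = ℓ := by omega
    exact ⟨he, by rw [he, Nat.mod_self]⟩

theorem stmt16 {V : Type*} [DecidableEq V] (G : SimpleGraph V)
    [∀ v : V, Fintype (G.neighborSet v)]
    (X : ℕ → V) (ℓ m : ℕ) (hℓ : 3 ≤ ℓ) (u : Fin ℓ → V)
    (hinj : Function.Injective u)
    (hadj : ∀ j : Fin ℓ, G.Adj (u j) (u ⟨(j.val + 1) % ℓ, Nat.mod_lt _ (by omega)⟩))
    (htrav : ∀ i : ℕ, i ≤ ℓ → X (m + i) = u ⟨i % ℓ, Nat.mod_lt i (by omega)⟩) :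
    (∀ j : Fin ℓ,
      cross X (m + ℓ) (u j) (u ⟨(j.val + 1) % ℓ, Nat.mod_lt _ (by omega)⟩) =
        cross X m (u j) (u ⟨(j.val + 1) % ℓ, Nat.mod_lt _ (by omega)⟩) + 1) ∧
    (∀ x y : V,
      (∀ j : Fin ℓ,
        ¬((x = u j ∧ y = u ⟨(j.val + 1) % ℓ, Nat.mod_lt _ (by omega)⟩) ∨
          (x = u ⟨(j.val + 1) % ℓ, Nat.mod_lt _ (by omega)⟩ ∧ y = u j))) →
      cross X (m + ℓ) x y = cross X m x y) := by
  have hpos : 0 < ℓ := by omega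
  have key : ∀ x y : V, cross X (m + ℓ) x y = cross X m x y +
      ∑ i ∈ Finset.range ℓ,
        ((if u ⟨i % ℓ, Nat.mod_lt i hpos⟩ = x ∧
              u ⟨(i+1) % ℓ, Nat.mod_lt _ hpos⟩ = y then (1:ℤ) else 0)
          - (if u ⟨i % ℓ, Nat.mod_lt i hpos⟩ = y ∧
              u ⟨(i+1) % ℓ, Nat.mod_lt _ hpos⟩ = x then (1:ℤ) else 0)) := by
    intro x y
    unfold cross
    rw [Finset.sum_range_add]
    congr 1
    apply Finset.sum_congr rfl
    intro i hi
    simp only [Finset.mem_range] at hi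
    rw [htrav i (le_of_lt hi), show m + i + 1 = m + (i+1) by ring,
      htrav (i+1) (by omega)]
  constructor
  · intro j
    rw [key]
    congr 1
    have : ∑ i ∈ Finset.range ℓ, (if i = j.val then (1:ℤ) else 0) = 1 := by
      rw [Finset.sum_ite_eq' (Finset.range ℓ)]
      simp [j.isLt]
    refine Eq.trans ?_ this
    apply Finset.sum_congr rfl
    intro i hi
    simp only [Finset.mem_range] at hi
    have hij : i % ℓ = i := Nat.mod_eq_of_lt hi
    have hj := j.isLt
    by_cases h : i = j.val
    · have hc1a : u ⟨i % ℓ, Nat.mod_lt i hpos⟩ = u j := by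
        congr 1; apply Fin.ext; show i % ℓ = j.val; omega
      have hc1b : u ⟨(i+1) % ℓ, Nat.mod_lt _ hpos⟩ =
          u ⟨(j.val+1) % ℓ, Nat.mod_lt _ hpos⟩ := by
        congr 1; exact Fin.ext (by rw [h])
      have hc2 : ¬(u ⟨i % ℓ, Nat.mod_lt i hpos⟩ =
          u ⟨(j.val+1) % ℓ, Nat.mod_lt _ hpos⟩) := by
        intro hc
        have hv : i % ℓ = (j.val + 1) % ℓ := congrArg Fin.val (hinj hc)
        rcases succ_mod_cases j.val ℓ hj with hm | ⟨hm1, hm2⟩ <;> omega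
      simp only [h] at hc1a hc1b hc2 ⊢
      simp [hc1a, hc1b, hc2]
      exact fun hc => absurd (hc1a.trans hc) hc2
    · have hc1 : ¬(u ⟨i % ℓ, Nat.mod_lt i hpos⟩ = u j) := by
        intro hc
        have hv : i % ℓ = j.val := congrArg Fin.val (hinj hc)
        omega
      have hc2 : ¬(u ⟨i % ℓ, Nat.mod_lt i hpos⟩ =
            u ⟨(j.val+1) % ℓ, Nat.mod_lt _ hpos⟩ ∧
          u ⟨(i+1) % ℓ, Nat.mod_lt _ hpos⟩ = u j) := by
        rintro ⟨ha, hb⟩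
        have hva : i % ℓ = (j.val + 1) % ℓ := congrArg Fin.val (hinj ha)
        have hvb : (i + 1) % ℓ = j.val := congrArg Fin.val (hinj hb)
        rcases succ_mod_cases j.val ℓ hj with hm | ⟨hm1, hm2⟩ <;>
          rcases succ_mod_cases i ℓ hi with hn | ⟨hn1, hn2⟩ <;> omega
      simp [hc1, hc2, h]
  · intro x y hxy
    rw [key]
    have : ∑ i ∈ Finset.range ℓ,
        ((if u ⟨i % ℓ, Nat.mod_lt i hpos⟩ = x ∧
              u ⟨(i+1) % ℓ, Nat.mod_lt _ hpos⟩ = y then (1:ℤ) else 0)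
          - (if u ⟨i % ℓ, Nat.mod_lt i hpos⟩ = y ∧
              u ⟨(i+1) % ℓ, Nat.mod_lt _ hpos⟩ = x then (1:ℤ) else 0)) = 0 := by
      apply Finset.sum_eq_zero
      intro i hi
      have hfin : (⟨(i % ℓ + 1) % ℓ, Nat.mod_lt _ hpos⟩ : Fin ℓ) =
          ⟨(i+1) % ℓ, Nat.mod_lt _ hpos⟩ := by
        apply Fin.ext
        simp [Nat.mod_add_mod]
      have h := hxy ⟨i % ℓ, Nat.mod_lt i hpos⟩
      rw [hfin] at h
      push_neg at h
      have h1 : ¬(u ⟨i % ℓ, Nat.mod_lt i hpos⟩ = x ∧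
          u ⟨(i+1) % ℓ, Nat.mod_lt _ hpos⟩ = y) := by
        rintro ⟨ha, hb⟩; exact (h.1 ha.symm) hb.symm
      have h2 : ¬(u ⟨i % ℓ, Nat.mod_lt i hpos⟩ = y ∧
          u ⟨(i+1) % ℓ, Nat.mod_lt _ hpos⟩ = x) := by
        rintro ⟨ha, hb⟩; exact (h.2 hb.symm) ha.symm
      simp [h1, h2]
    rw [this, add_zero]
end
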